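/- Let (R, m) be a commutative Noetherian local ring, S := R[X]_{⟨m,X⟩}, and let J be an ideal of R. Then J is an integrally closed ideal of R if and only if JS + XS is an integrally closed ideal of S. -/

import Mathlib

/-!
Evaluation at `X = 0` induces a retraction `S → R` of the structure map `R → S` whose kernel
is `XS`, so `JS + XS` is the preimage of `J`. Equations of integral dependence over an ideal
push forward along any ring map; pushing them along the retraction and along the structure map
transfers integral closedness in each direction.
-/

open Polynomial IsLocalRing CategoryTheory Filter
open scoped ENNReal

noncomputable section

/-- The length of a module, i.e. the length of the longest chain of submodules.
For a vector space this equals its dimension. -/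
def moduleLength (R V : Type) [CommRing R] [AddCommGroup V] [Module R V] : ℕ∞ :=
  (Order.krullDim (Submodule R V)).unbotD 0

/-- `Ext_R^n(M, N)`. -/
def extModule (R : Type) [CommRing R] (M N : Type)
    [AddCommGroup M] [Module R M] [AddCommGroup N] [Module R N] (n : ℕ) : ModuleCat R :=
  ((Ext R (ModuleCat R) n).obj (Opposite.op (ModuleCat.of R M))).obj (ModuleCat.of R N)

/-- The `n`-th Betti number `β_n^R(M) = dim_k Ext_R^n(M, k)` of a module `M` over a local
ring `(R, 𝔪, k)`, where the `k`-dimension is expressed as the length of the module. -/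
def betti (R : Type) [CommRing R] [IsLocalRing R] (M : Type)
    [AddCommGroup M] [Module R M] (n : ℕ) : ℕ∞ :=
  moduleLength R (extModule R M (ResidueField R) n)

/-- The complexity `cx_R(M)`: the least `b : ℕ` such that `β_n^R(M) ≤ α * n ^ (b - 1)`
for some real `α > 0` and all `n ≫ 0`; `⊤` if no such `b` exists. -/
def complexity (R : Type) [CommRing R] [IsLocalRing R] (M : Type)
    [AddCommGroup M] [Module R M] : ℕ∞ :=
  sInf {c : ℕ∞ | ∃ b : ℕ, c = b ∧ ∃ α : ℝ, 0 < α ∧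
    ∀ᶠ n : ℕ in atTop, (betti R M n : ℝ≥0∞) ≤ ENNReal.ofReal (α * (n : ℝ) ^ ((b : ℝ) - 1))}

/-- The curvature `curv_R(M) = limsup_n (β_n^R(M)) ^ (1/n)`. -/
def curvature (R : Type) [CommRing R] [IsLocalRing R] (M : Type)
    [AddCommGroup M] [Module R M] : ℝ≥0∞ :=
  limsup (fun n : ℕ => (betti R M n : ℝ≥0∞) ^ ((1 : ℝ) / n)) atTop

section S

variable (R : Type) [CommRing R] [IsLocalRing R]

/-- The maximal ideal `⟨𝔪, X⟩` of `R[X]`. -/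
def mIdeal : Ideal R[X] := (maximalIdeal R).map (C : R →+* R[X]) ⊔ Ideal.span {X}

lemma mIdeal_eq_ker :
    mIdeal R = RingHom.ker ((residue R).comp (evalRingHom (0 : R))) := by
  apply le_antisymm
  · apply sup_le
    · rw [Ideal.map_le_iff_le_comap]
      intro a ha
      simp only [Ideal.mem_comap, RingHom.mem_ker, RingHom.comp_apply, coe_evalRingHom, eval_C]
      exact (residue_eq_zero_iff a).mpr ha
    · rw [Ideal.span_le]
      rintro _ rfl
      simp [RingHom.mem_ker]
  · intro f hf
    simp only [RingHom.mem_ker, RingHom.comp_apply, coe_evalRingHom] at hf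
    have h0 : f.coeff 0 ∈ maximalIdeal R := by
      rw [coeff_zero_eq_eval_zero]
      exact (residue_eq_zero_iff _).mp hf
    have : f = X * f.divX + C (f.coeff 0) := (X_mul_divX_add f).symm
    rw [this]
    apply Ideal.add_mem
    · exact Ideal.mem_sup_right (Ideal.mul_mem_right _ _ (Ideal.subset_span rfl))
    · exact Ideal.mem_sup_left (Ideal.mem_map_of_mem _ h0)

instance : (mIdeal R).IsMaximal := by
  rw [mIdeal_eq_ker]
  exact RingHom.ker_isMaximal_of_surjective _
    (residue_surjective.comp fun r => ⟨C r, eval_C⟩)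

/-- `S := R[X]` localized at the maximal ideal `⟨𝔪, X⟩`. -/
abbrev LocS : Type := Localization.AtPrime (mIdeal R)

instance : Algebra R (LocS R) :=
  ((algebraMap R[X] (LocS R)).comp (algebraMap R R[X])).toAlgebra

/-- The image of `X` in `S`. -/
def xS : LocS R := algebraMap R[X] (LocS R) X

/-- The ideal `JS + XS` of `S`. -/
def extIdeal (J : Ideal R) : Ideal (LocS R) :=
  J.map (algebraMap R (LocS R)) ⊔ Ideal.span {xS R}

end S
/-- `r` is integral over the ideal `J`: there is an equation
`r^n + a₁ r^{n-1} + ⋯ + aₙ = 0` with `aᵢ ∈ J^i`. -/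
def IsIntegralOverIdeal {R : Type} [CommRing R] (J : Ideal R) (r : R) : Prop :=
  ∃ n : ℕ, 0 < n ∧ ∃ a : ℕ → R, (∀ i ∈ Finset.Icc 1 n, a i ∈ J ^ i) ∧
    r ^ n + ∑ i ∈ Finset.Icc 1 n, a i * r ^ (n - i) = 0

/-- An ideal is integrally closed if it contains every element integral over it. -/
def IdealIsIntegrallyClosed {R : Type} [CommRing R] (J : Ideal R) : Prop :=
  ∀ r : R, IsIntegralOverIdeal J r → r ∈ J

/-- `M` has finite projective dimension, characterized by the eventual vanishing of
`Ext_R^i(M, -)`. -/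
def HasFiniteProjDim (R : Type) [CommRing R] (M : Type) [AddCommGroup M] [Module R M] : Prop :=
  ∃ n : ℕ, ∀ i : ℕ, n < i → ∀ (N : Type) (_ : AddCommGroup N) (_ : Module R N),
    Subsingleton (extModule R M N i)

/-- `M` has finite injective dimension, characterized by the eventual vanishing of
`Ext_R^i(-, M)`. -/
def HasFiniteInjDim (R : Type) [CommRing R] (M : Type) [AddCommGroup M] [Module R M] : Prop :=
  ∃ n : ℕ, ∀ i : ℕ, n < i → ∀ (N : Type) (_ : AddCommGroup N) (_ : Module R N),
    Subsingleton (extModule R N M i)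

/-- A (finitely generated) module `M` is totally reflexive if the canonical map to its double
dual is bijective and `Ext_R^i(M, R) = 0 = Ext_R^i(M^*, R)` for all `i > 0`. -/
def IsTotallyReflexive (R : Type) [CommRing R] (M : Type) [AddCommGroup M] [Module R M] : Prop :=
  Function.Bijective (Module.Dual.eval R M) ∧
    ∀ i : ℕ, 0 < i → Subsingleton (extModule R M R i) ∧
      Subsingleton (extModule R (Module.Dual R M) R i)

/-- `G-dim_R(M) ≤ n`: there is an exact sequence `0 → G_n → ⋯ → G_0 → M → 0` with all `G_i`
totally reflexive; phrased recursively via kernels of surjections from totally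
reflexive modules. -/
def GdimLE (R : Type) [CommRing R] : ℕ → (M : Type) → [AddCommGroup M] → [Module R M] → Prop
  | 0, M, _, _ => IsTotallyReflexive R M
  | (n + 1), M, _, _ => ∃ (G : Type) (_ : AddCommGroup G) (_ : Module R G) (f : G →ₗ[R] M),
      IsTotallyReflexive R G ∧ Function.Surjective f ∧ GdimLE R n (LinearMap.ker f)

/-- The Gorenstein dimension `G-dim_R(M) ∈ ℕ∞`. -/
def Gdim (R : Type) [CommRing R] (M : Type) [AddCommGroup M] [Module R M] : ℕ∞ :=
  sInf {c : ℕ∞ | ∃ n : ℕ, c = n ∧ GdimLE R n M}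

/-- A local ring is regular if its maximal ideal is generated by `dim R` elements. -/
def IsRegularLocal (R : Type) [CommRing R] [IsLocalRing R] : Prop :=
  ∃ s : Finset R, Ideal.span (s : Set R) = maximalIdeal R ∧
    (s.card : WithBot ℕ∞) = ringKrullDim R

/-- A Noetherian local ring `R` is a complete intersection if its `𝔪`-adic completion is
isomorphic to `Q/(f₁, …, f_c)` for some regular local ring `Q` and a `Q`-regular
sequence `f₁, …, f_c`. -/
def IsCompleteIntersectionLocal (R : Type) [CommRing R] [IsLocalRing R] : Prop :=
  ∃ (Q : Type) (_ : CommRing Q) (_ : IsLocalRing Q) (_ : IsNoetherianRing Q),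
    IsRegularLocal Q ∧ ∃ fs : List Q, RingTheory.Sequence.IsRegular Q fs ∧
      Nonempty ((AdicCompletion (maximalIdeal R) R) ≃+* (Q ⧸ Ideal.ofList fs))

lemma IsIntegralOverIdeal.map {A B : Type} [CommRing A] [CommRing B] (f : A →+* B)
    {J : Ideal A} {I : Ideal B} (hJI : J.map f ≤ I) {r : A}
    (hr : IsIntegralOverIdeal J r) : IsIntegralOverIdeal I (f r) := by
  obtain ⟨n, hn, a, ha, heq⟩ := hr
  refine ⟨n, hn, fun i => f (a i), fun i hi => ?_, ?_⟩
  · have hpow : (J ^ i).map f ≤ I ^ i := by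
      rw [Ideal.map_pow]
      exact Ideal.pow_right_mono hJI i
    exact hpow (Ideal.mem_map_of_mem f (ha i hi))
  · simpa only [map_add, map_pow, map_sum, map_mul, map_zero] using congrArg f heq

namespace IdealIsIntegrallyClosed

variable {A B : Type} [CommRing A] [CommRing B] {J : Ideal A}

lemma comap (f : B →+* A) (hJ : IdealIsIntegrallyClosed J) :
    IdealIsIntegrallyClosed (J.comap f) := fun _ hs =>
  hJ _ (hs.map f Ideal.map_comap_le)

lemma of_comap_of_leftInverse (f : B →+* A) (g : A →+* B) (hfg : Function.LeftInverse f g)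
    (hJ : IdealIsIntegrallyClosed (J.comap f)) : IdealIsIntegrallyClosed J := by
  intro r hr
  have hle : J.map g ≤ J.comap f := by
    rw [Ideal.map_le_iff_le_comap]
    intro a ha
    rwa [Ideal.mem_comap, Ideal.mem_comap, hfg a]
  have hgr := hJ _ (hr.map g hle)
  rwa [Ideal.mem_comap, hfg r] at hgr

end IdealIsIntegrallyClosed

section LocS

variable (R : Type) [CommRing R] [IsLocalRing R]

lemma isUnit_eval_zero_of_mem_primeCompl (y : (mIdeal R).primeCompl) :
    IsUnit ((y : R[X]).eval 0) := by
  have hy : (y : R[X]) ∉ RingHom.ker ((residue R).comp (evalRingHom (0 : R))) := by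
    rw [← mIdeal_eq_ker]
    exact y.2
  rw [RingHom.mem_ker, RingHom.comp_apply, residue_eq_zero_iff, mem_maximalIdeal,
    mem_nonunits_iff, not_not] at hy
  exact hy

def evalZeroLocS : LocS R →+* R :=
  IsLocalization.lift (M := (mIdeal R).primeCompl) (g := evalRingHom 0)
    (isUnit_eval_zero_of_mem_primeCompl R)

lemma evalZeroLocS_algebraMap_polynomial (f : R[X]) :
    evalZeroLocS R (algebraMap R[X] (LocS R) f) = f.eval 0 :=
  IsLocalization.lift_eq _ f

lemma evalZeroLocS_algebraMap (r : R) : evalZeroLocS R (algebraMap R (LocS R) r) = r :=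
  (evalZeroLocS_algebraMap_polynomial R (C r)).trans (eval_C)

lemma evalZeroLocS_xS : evalZeroLocS R (xS R) = 0 :=
  (evalZeroLocS_algebraMap_polynomial R X).trans (eval_X)

lemma ker_evalZeroLocS : RingHom.ker (evalZeroLocS R) = Ideal.span {xS R} := by
  refine le_antisymm (fun s hs => ?_) ?_
  · obtain ⟨f, t, rfl⟩ := IsLocalization.exists_mk'_eq (mIdeal R).primeCompl s
    have hf0 : f.coeff 0 = 0 := by
      have hspec := congrArg (evalZeroLocS R) (IsLocalization.mk'_spec (LocS R) f t)
      rw [map_mul, RingHom.mem_ker.mp hs, zero_mul, evalZeroLocS_algebraMap_polynomial] at hspec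
      rw [coeff_zero_eq_eval_zero, ← hspec]
    have hf : f = X * f.divX := by
      conv_lhs => rw [← X_mul_divX_add f, hf0, map_zero, add_zero]
    rw [Ideal.mem_span_singleton]
    refine ⟨algebraMap R[X] (LocS R) f.divX * IsLocalization.mk' (LocS R) 1 t, ?_⟩
    conv_lhs => rw [hf]
    rw [IsLocalization.mk'_eq_mul_mk'_one, map_mul, xS]
    ring
  · rw [Ideal.span_le, Set.singleton_subset_iff, SetLike.mem_coe, RingHom.mem_ker]
    exact evalZeroLocS_xS R

lemma extIdeal_eq_comap_evalZeroLocS (J : Ideal R) :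
    extIdeal R J = J.comap (evalZeroLocS R) := by
  refine le_antisymm (sup_le ?_ ?_) fun s hs => ?_
  · rw [Ideal.map_le_iff_le_comap]
    intro r hr
    rwa [Ideal.mem_comap, Ideal.mem_comap, evalZeroLocS_algebraMap]
  · rw [Ideal.span_le, Set.singleton_subset_iff, SetLike.mem_coe, Ideal.mem_comap,
      evalZeroLocS_xS]
    exact J.zero_mem
  · set r := evalZeroLocS R s
    have hker : s - algebraMap R (LocS R) r ∈ Ideal.span {xS R} := by
      rw [← ker_evalZeroLocS, RingHom.mem_ker, map_sub, evalZeroLocS_algebraMap, sub_self]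
    rw [← add_sub_cancel (algebraMap R (LocS R) r) s]
    exact Ideal.add_mem _ (Ideal.mem_sup_left (Ideal.mem_map_of_mem _ hs))
      (Ideal.mem_sup_right hker)

end LocS

theorem stmt_6_general (R : Type) [CommRing R] [IsLocalRing R] (J : Ideal R) :
    IdealIsIntegrallyClosed J ↔ IdealIsIntegrallyClosed (extIdeal R J) := by
  rw [extIdeal_eq_comap_evalZeroLocS]
  exact ⟨IdealIsIntegrallyClosed.comap _,
    IdealIsIntegrallyClosed.of_comap_of_leftInverse _ (algebraMap R (LocS R))
      (evalZeroLocS_algebraMap R)⟩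

/-- `J` is integrally closed in `R` iff `JS + XS` is integrally closed in `S`. -/
theorem stmt_6 (R : Type) [CommRing R] [IsLocalRing R] [IsNoetherianRing R] (J : Ideal R) :
    IdealIsIntegrallyClosed J ↔ IdealIsIntegrallyClosed (extIdeal R J) :=
  stmt_6_general R J
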